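/- Let C be a circuit of an orthogonal matroid M on E = [n] ∪ [n]*. Then there exists a transversal T containing C such that for every x ∈ C, the set T △ {x, x*} is a basis of M. -/
import Mathlib


open scoped Classical

/-- The ground set `E = [n] ∪ [n]*`: `(i, true)` encodes `i ∈ [n]` and `(i, false)` encodes
`i* ∈ [n]*`. -/
abbrev OE (n : ℕ) := Fin n × Bool

/-- The involution `* : E → E`. -/
def ostar {n : ℕ} (x : OE n) : OE n := (x.1, !x.2)

/-- The divergence `{x, x*}`. -/
def pairS {n : ℕ} (x : OE n) : Finset (OE n) := {x, ostar x}

/-- `A` is admissible (a subtransversal): `A ∩ A* = ∅`. -/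
def IsAdmissible {n : ℕ} (A : Finset (OE n)) : Prop := ∀ x ∈ A, ostar x ∉ A

/-- A transversal: an admissible set of size `n`. -/
def IsTransversal {n : ℕ} (T : Finset (OE n)) : Prop := T.card = n ∧ IsAdmissible T

/-- `𝓑` is the set of bases of an orthogonal matroid on `E = [n] ∪ [n]*`: a nonempty
collection of transversals satisfying the symmetric exchange axiom. -/
def IsOrthoMatroid {n : ℕ} (𝓑 : Set (Finset (OE n))) : Prop :=
  𝓑.Nonempty ∧ (∀ B ∈ 𝓑, IsTransversal B) ∧
  ∀ B₁ ∈ 𝓑, ∀ B₂ ∈ 𝓑, ∀ x : OE n,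
    x ∈ symmDiff B₁ B₂ → ostar x ∈ symmDiff B₁ B₂ →
    ∃ y : OE n, y ∈ symmDiff B₁ B₂ ∧ ostar y ∈ symmDiff B₁ B₂ ∧
      pairS y ≠ pairS x ∧ symmDiff B₁ (pairS x ∪ pairS y) ∈ 𝓑

/-- An admissible set is independent if it is contained in some basis. -/
def IsIndep {n : ℕ} (𝓑 : Set (Finset (OE n))) (I : Finset (OE n)) : Prop := ∃ B ∈ 𝓑, I ⊆ B

/-- A circuit: a minimal dependent admissible set. -/
def IsCircuit {n : ℕ} (𝓑 : Set (Finset (OE n))) (C : Finset (OE n)) : Prop :=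
  IsAdmissible C ∧ ¬ IsIndep 𝓑 C ∧ ∀ D ⊂ C, IsIndep 𝓑 D

section Aux
variable {n : ℕ}

lemma ostar_ostar (x : OE n) : ostar (ostar x) = x := by simp [ostar]

lemma mem_pairS {a x : OE n} : a ∈ pairS x ↔ a = x ∨ a = ostar x := by
  simp [pairS]

lemma pairS_ostar (x : OE n) : pairS (ostar x) = pairS x := by
  simp [pairS, ostar_ostar, Finset.pair_comm]

lemma pairS_eq_of_mem {a x : OE n} (h : a ∈ pairS x) : pairS a = pairS x := by
  rcases mem_pairS.1 h with rfl | rfl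
  · rfl
  · exact pairS_ostar x

lemma ostar_mem_pairS {a x : OE n} (h : a ∈ pairS x) : ostar a ∈ pairS x := by
  rcases mem_pairS.1 h with rfl | rfl
  · exact mem_pairS.2 (Or.inr rfl)
  · exact mem_pairS.2 (Or.inl (ostar_ostar x))

lemma injOn_fst {A : Finset (OE n)} (hA : IsAdmissible A) :
    Set.InjOn Prod.fst (A : Set (OE n)) := by
  intro a ha b hb hab
  by_contra hne
  have h2 : b = ostar a := by
    obtain ⟨a1, a2⟩ := a; obtain ⟨b1, b2⟩ := b
    simp only [ostar, Prod.mk.injEq] at *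
    cases a2 <;> cases b2 <;> simp_all
  exact hA a ha (h2 ▸ hb)

lemma isTransversal_of {A : Finset (OE n)} (hA : IsAdmissible A)
    (hcomp : ∀ a : OE n, a ∉ A → ostar a ∈ A) : IsTransversal A := by
  refine ⟨?_, hA⟩
  have himg : A.image Prod.fst = Finset.univ := by
    ext i
    simp only [Finset.mem_image, Finset.mem_univ, iff_true]
    by_cases h : (i, true) ∈ A
    · exact ⟨(i, true), h, rfl⟩
    · exact ⟨(i, false), hcomp (i, true) h, rfl⟩
  have := Finset.card_image_of_injOn (injOn_fst hA)
  rw [himg] at this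
  simpa using this.symm

lemma compl_mem {B : Finset (OE n)} (hB : IsTransversal B) {a : OE n} (ha : a ∉ B) :
    ostar a ∈ B := by
  have hcard : (B.image Prod.fst).card = Fintype.card (Fin n) := by
    rw [Finset.card_image_of_injOn (injOn_fst hB.2), hB.1]; simp
  have himg : B.image Prod.fst = Finset.univ := Finset.eq_univ_of_card _ hcard
  have : a.1 ∈ B.image Prod.fst := himg ▸ Finset.mem_univ _
  obtain ⟨b, hb, hb1⟩ := Finset.mem_image.1 this
  have hne : b ≠ a := fun h => ha (h ▸ hb)
  have : b = ostar a := by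
    obtain ⟨a1, a2⟩ := a; obtain ⟨b1, b2⟩ := b
    simp only [ostar, Prod.mk.injEq] at *
    cases a2 <;> cases b2 <;> simp_all
  exact this ▸ hb

lemma trans_symmDiff_pair {B : Finset (OE n)} (hB : IsTransversal B) (x : OE n) :
    IsTransversal (symmDiff B (pairS x)) := by
  apply isTransversal_of
  · intro a ha hsa
    rw [Finset.mem_symmDiff] at ha hsa
    by_cases hp : a ∈ pairS x
    · have hsp : ostar a ∈ pairS x := ostar_mem_pairS hp
      have h1 : a ∉ B := by tauto
      have h2 : ostar a ∉ B := by tauto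
      exact h2 (compl_mem hB h1)
    · have hsp : ostar a ∉ pairS x := fun h => hp (by simpa [ostar_ostar] using ostar_mem_pairS h)
      have h1 : a ∈ B := by tauto
      have h2 : ostar a ∈ B := by tauto
      exact hB.2 a h1 h2
  · intro a ha
    rw [Finset.mem_symmDiff] at ha
    push_neg at ha
    rw [Finset.mem_symmDiff]
    by_cases hp : a ∈ pairS x
    · have haB : a ∈ B := by tauto
      have hsp : ostar a ∈ pairS x := ostar_mem_pairS hp
      exact Or.inr ⟨hsp, hB.2 a haB⟩
    · have hsp : ostar a ∉ pairS x := fun h => hp (by simpa [ostar_ostar] using ostar_mem_pairS h)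
      have haB : a ∉ B := by tauto
      exact Or.inl ⟨compl_mem hB haB, hsp⟩

lemma key {n : ℕ} {𝓑 : Set (Finset (OE n))} (h : IsOrthoMatroid 𝓑)
    {C : Finset (OE n)} (hC : IsCircuit 𝓑 C) {B : Finset (OE n)} (hB : B ∈ 𝓑)
    {x₀ z : OE n} (hx₀C : x₀ ∈ C) (hzC : z ∈ C) (hne : z ≠ x₀)
    (hBsub : C.erase x₀ ⊆ B) :
    symmDiff (symmDiff B (pairS x₀)) (pairS z) ∈ 𝓑 := by
  obtain ⟨hCadm, hCdep, hCmin⟩ := hC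
  obtain ⟨hne𝓑, htrans, hexch⟩ := h
  have hx₀B : x₀ ∉ B := fun hx => hCdep ⟨B, hB, fun w hw => by
    by_cases hwx : w = x₀
    · exact hwx ▸ hx
    · exact hBsub (Finset.mem_erase.2 ⟨hwx, hw⟩)⟩
  have hx₀sB : ostar x₀ ∈ B := compl_mem (htrans B hB) hx₀B
  have hzB : z ∈ B := hBsub (Finset.mem_erase.2 ⟨hne, hzC⟩)
  have hzsB : ostar z ∉ B := htrans B hB |>.2 z hzB
  obtain ⟨B₂, hB₂, hB₂sub⟩ := hCmin (C.erase z) (Finset.erase_ssubset hzC)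
  have hzB₂ : z ∉ B₂ := fun hz => hCdep ⟨B₂, hB₂, fun w hw => by
    by_cases hwz : w = z
    · exact hwz ▸ hz
    · exact hB₂sub (Finset.mem_erase.2 ⟨hwz, hw⟩)⟩
  have hzsB₂ : ostar z ∈ B₂ := compl_mem (htrans B₂ hB₂) hzB₂
  have hx₀B₂ : x₀ ∈ B₂ := hB₂sub (Finset.mem_erase.2 ⟨fun hh => hne hh.symm, hx₀C⟩)
  have hx₀sB₂ : ostar x₀ ∉ B₂ := htrans B₂ hB₂ |>.2 x₀ hx₀B₂
  have hm1 : x₀ ∈ symmDiff B B₂ := Finset.mem_symmDiff.2 (Or.inr ⟨hx₀B₂, hx₀B⟩)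
  have hm2 : ostar x₀ ∈ symmDiff B B₂ := Finset.mem_symmDiff.2 (Or.inl ⟨hx₀sB, hx₀sB₂⟩)
  obtain ⟨y, hy1, hy2, hy3, hy4⟩ := hexch B hB B₂ hB₂ x₀ hm1 hm2
  have hzx₀ : z ∉ pairS x₀ := by
    rw [mem_pairS]
    rintro (rfl | rfl)
    · exact hne rfl
    · exact hCadm x₀ hx₀C hzC
  by_cases hyz : pairS y = pairS z
  · have hdisj : ∀ a : OE n, a ∈ pairS x₀ → a ∉ pairS z := fun a ha hb =>
      hzx₀ (by rw [← pairS_eq_of_mem ha, pairS_eq_of_mem hb]; exact mem_pairS.2 (Or.inl rfl))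
    have hdisjF : Disjoint (pairS x₀) (pairS z) := Finset.disjoint_left.2 hdisj
    have heq : symmDiff B (pairS x₀ ∪ pairS z) = symmDiff (symmDiff B (pairS x₀)) (pairS z) := by
      have hu : pairS x₀ ∪ pairS z = symmDiff (pairS x₀) (pairS z) := by
        rw [hdisjF.symmDiff_eq_sup]; rfl
      rw [hu, symmDiff_assoc]
    rw [← heq, ← hyz]
    exact hy4
  · exfalso
    apply hCdep
    refine ⟨_, hy4, fun w hw => ?_⟩
    have hyBB₂ : ∀ b ∈ pairS y, b ∈ symmDiff B B₂ := by
      intro b hb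
      rcases mem_pairS.1 hb with rfl | rfl
      · exact hy1
      · exact hy2
    by_cases hwx : w = x₀
    · subst hwx
      exact Finset.mem_symmDiff.2 (Or.inr
        ⟨Finset.mem_union_left _ (mem_pairS.2 (Or.inl rfl)), hx₀B⟩)
    by_cases hwz : w = z
    · subst hwz
      have h1 : w ∉ pairS y := fun hm => hyz (pairS_eq_of_mem hm).symm
      exact Finset.mem_symmDiff.2 (Or.inl ⟨hzB, Finset.notMem_union.2 ⟨hzx₀, h1⟩⟩)
    · have hwB : w ∈ B := hBsub (Finset.mem_erase.2 ⟨hwx, hw⟩)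
      have hwB₂ : w ∈ B₂ := hB₂sub (Finset.mem_erase.2 ⟨hwz, hw⟩)
      have hwBB₂ : w ∉ symmDiff B B₂ := by
        rw [Finset.mem_symmDiff]; tauto
      have hwy : w ∉ pairS y := fun hm => hwBB₂ (hyBB₂ w hm)
      have hwx₀ : w ∉ pairS x₀ := by
        rw [mem_pairS]
        rintro (rfl | rfl)
        · exact hwx rfl
        · exact hCadm x₀ hx₀C hw
      exact Finset.mem_symmDiff.2 (Or.inl ⟨hwB, Finset.notMem_union.2 ⟨hwx₀, hwy⟩⟩)

end Aux

/-- For every circuit `C` of an orthogonal matroid there is a transversal `T ⊇ C` such that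
`T △ {x, x*}` is a basis for every `x ∈ C`. -/
theorem circuit_extends_to_transversal {n : ℕ} (𝓑 : Set (Finset (OE n)))
    (h : IsOrthoMatroid 𝓑) (C : Finset (OE n)) (hC : IsCircuit 𝓑 C) :
    ∃ T : Finset (OE n), IsTransversal T ∧ C ⊆ T ∧
      ∀ x ∈ C, symmDiff T (pairS x) ∈ 𝓑 := by
  obtain ⟨B₀, hB₀⟩ := h.1
  have hCne : C.Nonempty := by
    rcases Finset.eq_empty_or_nonempty C with rfl | h'
    · exact absurd ⟨B₀, hB₀, Finset.empty_subset _⟩ hC.2.1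
    · exact h'
  obtain ⟨x₀, hx₀⟩ := hCne
  obtain ⟨B, hB, hBsub⟩ := hC.2.2 (C.erase x₀) (Finset.erase_ssubset hx₀)
  have hx₀B : x₀ ∉ B := fun hx => hC.2.1 ⟨B, hB, fun w hw => by
    by_cases hwx : w = x₀
    · exact hwx ▸ hx
    · exact hBsub (Finset.mem_erase.2 ⟨hwx, hw⟩)⟩
  refine ⟨symmDiff B (pairS x₀), trans_symmDiff_pair (h.2.1 B hB) x₀, ?_, ?_⟩
  · intro w hw
    by_cases hwx : w = x₀
    · subst hwx
      exact Finset.mem_symmDiff.2 (Or.inr ⟨mem_pairS.2 (Or.inl rfl), hx₀B⟩)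
    · have hwB : w ∈ B := hBsub (Finset.mem_erase.2 ⟨hwx, hw⟩)
      have hwp : w ∉ pairS x₀ := by
        rw [mem_pairS]
        rintro (rfl | rfl)
        · exact hwx rfl
        · exact hC.1 x₀ hx₀ hw
      exact Finset.mem_symmDiff.2 (Or.inl ⟨hwB, hwp⟩)
  · intro x hx
    by_cases hxx : x = x₀
    · subst hxx
      rw [symmDiff_symmDiff_cancel_right]; exact hB
    · exact key h hC hB hx₀ hx hxx hBsub
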